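/- Let A be an n×n Hermitian matrix, β > 0, z a stationary point of f(z) = (1/2) z* A z + (β/2) Σₖ |zₖ|⁴ on the complex unit sphere with multiplier λ, and H = A + 2β diag(|z|²) − 2λ I positive semidefinite. Then every global minimizer y of f on the unit sphere satisfies |y_k| = |z_k| for all k ∈ [n]. -/

import Mathlib

open Matrix Finset
open scoped ComplexOrder

/-!
For a unit vector `y`, expanding `y* H y` with `λ = ½ z* A z + β ‖z‖₄⁴` gives the exact identity
`f y = f z + (β / 2) ∑ₖ (|y_k|² - |z_k|²)² + ½ y* H y`.
Since `H ⪰ 0`, every point of the sphere has energy at least `f z` plus that sum of squares,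
so a global minimizer, whose energy is at most `f z`, forces every square to vanish.
-/

section QuarticEnergy

variable {𝕜 ι : Type*} [RCLike 𝕜] [Fintype ι] [DecidableEq ι]

theorem re_star_dotProduct_diagonal_mulVec (d : ι → ℝ) (y : ι → 𝕜) :
    RCLike.re (star y ⬝ᵥ diagonal (fun k => (d k : 𝕜)) *ᵥ y) = ∑ k, d k * ‖y k‖ ^ 2 := by
  simp only [dotProduct, mulVec_diagonal, Pi.star_apply, map_sum]
  refine sum_congr rfl fun k _ => ?_
  rw [mul_left_comm, RCLike.star_def, RCLike.conj_mul, ← RCLike.ofReal_pow,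
    RCLike.re_ofReal_mul, RCLike.ofReal_re]

theorem re_star_dotProduct_self (y : ι → 𝕜) :
    RCLike.re (star y ⬝ᵥ y) = ∑ k, ‖y k‖ ^ 2 := by
  simpa using re_star_dotProduct_diagonal_mulVec (fun _ => (1 : ℝ)) y

theorem re_star_dotProduct_add_smul_diagonal_sub_smul_one_mulVec
    (A : Matrix ι ι 𝕜) (c μ : ℝ) (d : ι → ℝ) (y : ι → 𝕜) :
    RCLike.re (star y ⬝ᵥ (A + c • diagonal (fun k => (d k : 𝕜)) - μ • 1) *ᵥ y)
      = RCLike.re (star y ⬝ᵥ A *ᵥ y) + c * ∑ k, d k * ‖y k‖ ^ 2 - μ * ∑ k, ‖y k‖ ^ 2 := by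
  rw [sub_mulVec, add_mulVec, smul_mulVec, smul_mulVec, one_mulVec, dotProduct_sub,
    dotProduct_add, dotProduct_smul, dotProduct_smul, map_sub, map_add, RCLike.smul_re,
    RCLike.smul_re, re_star_dotProduct_diagonal_mulVec, re_star_dotProduct_self]

noncomputable def quarticEnergy (A : Matrix ι ι 𝕜) (β : ℝ) (y : ι → 𝕜) : ℝ :=
  (1 / 2) * RCLike.re (star y ⬝ᵥ A *ᵥ y) + (β / 2) * ∑ k, ‖y k‖ ^ 4

noncomputable def quarticHessian (A : Matrix ι ι 𝕜) (β : ℝ) (z : ι → 𝕜) (lam : ℝ) :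
    Matrix ι ι 𝕜 :=
  A + (2 * β) • diagonal (fun k => ((‖z k‖ ^ 2 : ℝ) : 𝕜)) - (2 * lam) • 1

theorem quarticEnergy_eq_add_sum_sq_add_quarticHessian (A : Matrix ι ι 𝕜) (β : ℝ)
    {z y : ι → 𝕜} {lam : ℝ}
    (hlam : lam = (1 / 2) * RCLike.re (star z ⬝ᵥ A *ᵥ z) + β * ∑ k, ‖z k‖ ^ 4)
    (hy : ∑ k, ‖y k‖ ^ 2 = 1) :
    quarticEnergy A β y = quarticEnergy A β z + (β / 2) * ∑ k, (‖y k‖ ^ 2 - ‖z k‖ ^ 2) ^ 2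
      + (1 / 2) * RCLike.re (star y ⬝ᵥ quarticHessian A β z lam *ᵥ y) := by
  have hsq : ∑ k, (‖y k‖ ^ 2 - ‖z k‖ ^ 2) ^ 2
      = ∑ k, ‖y k‖ ^ 4 - 2 * ∑ k, ‖z k‖ ^ 2 * ‖y k‖ ^ 2 + ∑ k, ‖z k‖ ^ 4 := by
    rw [mul_sum, ← sum_sub_distrib, ← sum_add_distrib]
    exact sum_congr rfl fun k _ => by ring
  rw [quarticHessian, re_star_dotProduct_add_smul_diagonal_sub_smul_one_mulVec, hy, hsq, hlam,
    quarticEnergy, quarticEnergy]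
  ring

theorem quarticEnergy_add_sum_sq_le {A : Matrix ι ι 𝕜} {β : ℝ} {z y : ι → 𝕜} {lam : ℝ}
    (hlam : lam = (1 / 2) * RCLike.re (star z ⬝ᵥ A *ᵥ z) + β * ∑ k, ‖z k‖ ^ 4)
    (hH : (quarticHessian A β z lam).PosSemidef)
    (hy : ∑ k, ‖y k‖ ^ 2 = 1) :
    quarticEnergy A β z + (β / 2) * ∑ k, (‖y k‖ ^ 2 - ‖z k‖ ^ 2) ^ 2 ≤ quarticEnergy A β y := by
  have hq : 0 ≤ RCLike.re (star y ⬝ᵥ quarticHessian A β z lam *ᵥ y) :=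
    (RCLike.nonneg_iff.mp (hH.dotProduct_mulVec_nonneg y)).1
  rw [quarticEnergy_eq_add_sum_sq_add_quarticHessian A β hlam hy]
  linarith

end QuarticEnergy

theorem eq_of_sum_sq_sub_sq_nonpos {ι : Type*} [Fintype ι] {a b : ι → ℝ} (ha : 0 ≤ a)
    (hb : 0 ≤ b) (h : ∑ k, (a k ^ 2 - b k ^ 2) ^ 2 ≤ 0) : a = b := by
  have hzero := (sum_eq_zero_iff_of_nonneg fun k _ => sq_nonneg (a k ^ 2 - b k ^ 2)).mp
    (le_antisymm h (sum_nonneg fun k _ => sq_nonneg _))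
  funext k
  have hk : a k ^ 2 - b k ^ 2 = 0 := pow_eq_zero_iff two_ne_zero |>.mp (hzero k (mem_univ k))
  exact (sq_eq_sq₀ (ha k) (hb k)).mp (sub_eq_zero.mp hk)

theorem stmt1 {n : ℕ} (A : Matrix (Fin n) (Fin n) ℂ)
    (β : ℝ) (hβ : 0 < β) (z : Fin n → ℂ) (hz : ∑ k, ‖z k‖ ^ 2 = 1)
    (lam : ℝ)
    (hlam : lam = (1 / 2) * (star z ⬝ᵥ A.mulVec z).re + β * ∑ k, ‖z k‖ ^ 4)
    (hH : (A + (2 * β) • Matrix.diagonal (fun k => ((‖z k‖ ^ 2 : ℝ) : ℂ))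
        - (2 * lam) • (1 : Matrix (Fin n) (Fin n) ℂ)).PosSemidef)
    (y : Fin n → ℂ) (hy : ∑ k, ‖y k‖ ^ 2 = 1)
    (hglob : ∀ w : Fin n → ℂ, ∑ k, ‖w k‖ ^ 2 = 1 →
      (1 / 2) * (star y ⬝ᵥ A.mulVec y).re + (β / 2) * ∑ k, ‖y k‖ ^ 4 ≤
      (1 / 2) * (star w ⬝ᵥ A.mulVec w).re + (β / 2) * ∑ k, ‖w k‖ ^ 4) :
    ∀ k, ‖y k‖ = ‖z k‖ := by
  have hgap : quarticEnergy A β z + (β / 2) * ∑ k, (‖y k‖ ^ 2 - ‖z k‖ ^ 2) ^ 2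
      ≤ quarticEnergy A β y :=
    quarticEnergy_add_sum_sq_le hlam hH hy
  have hmin : quarticEnergy A β y ≤ quarticEnergy A β z := hglob z hz
  have hsum : ∑ k, (‖y k‖ ^ 2 - ‖z k‖ ^ 2) ^ 2 ≤ 0 :=
    nonpos_of_mul_nonpos_right (by linarith) (half_pos hβ)
  exact congrFun (eq_of_sum_sq_sub_sq_nonpos (fun k => norm_nonneg (y k))
    (fun k => norm_nonneg (z k)) hsum)
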